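/- Conversely, if E is a finite set of pure states on ℂ^d whose convex hull is a Δ-net of the pure states in trace distance (every pure state is within trace distance Δ of some convex combination of elements of E), then E itself is a √Δ-net of the pure states. -/

import Mathlib

open Matrix
open scoped Kronecker ComplexOrder

noncomputable section

variable {n : Type*} [Fintype n] [DecidableEq n]

/-- Square root of a positive semidefinite matrix (0 if not PSD). -/
def msqrt (M : Matrix n n ℂ) : Matrix n n ℂ := by
  classical exact if h : M.PosSemidef then
    (h.1.eigenvectorUnitary : Matrix n n ℂ) *
      diagonal ((↑) ∘ (fun x : ℝ => Real.sqrt x) ∘ h.1.eigenvalues) *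
      (star h.1.eigenvectorUnitary : Matrix n n ℂ) else 0

/-- Trace norm ‖M‖₁ = tr √(M Mᴴ). -/
def traceNorm (M : Matrix n n ℂ) : ℝ := ((msqrt (M * Mᴴ)).trace).re

/-- Trace distance (1/2)‖ρ − σ‖₁. -/
def traceDist (ρ σ : Matrix n n ℂ) : ℝ := traceNorm (ρ - σ) / 2

/-- Uhlmann fidelity F(ρ,σ) = (tr √(√σ ρ √σ))². -/
def fidelity (ρ σ : Matrix n n ℂ) : ℝ :=
  (((msqrt (msqrt σ * ρ * msqrt σ)).trace).re) ^ 2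

/-- Density operator: positive semidefinite with unit trace. -/
def IsDensity (ρ : Matrix n n ℂ) : Prop := ρ.PosSemidef ∧ ρ.trace = 1

/-- Rank-one operator |v⟩⟨v| associated with a vector. -/
def vecState {α : Type*} (v : α → ℂ) : Matrix α α ℂ :=
  Matrix.of fun i j => v i * (starRingEnd ℂ) (v j)

/-- Pure state: |v⟩⟨v| for some unit vector v. -/
def IsPure {α : Type*} [Fintype α] (φ : Matrix α α ℂ) : Prop :=
  ∃ v : α → ℂ, (∑ i, Complex.normSq (v i)) = 1 ∧ φ = vecState v

/-- Set of separable states across the cut α : β. -/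
def SepSet (α β : Type*) [Fintype α] [Fintype β] : Set (Matrix (α × β) (α × β) ℂ) :=
  convexHull ℝ {σ | ∃ φ ψ, IsPure φ ∧ IsPure ψ ∧ σ = φ ⊗ₖ ψ}

variable {α β : Type*} [Fintype α] [Fintype β] [DecidableEq α] [DecidableEq β]

/-- Extension Γ ⊗ id of a linear map on matrices by a k-dimensional ancilla. -/
def lmapExt (Γ : Matrix α α ℂ →ₗ[ℂ] Matrix β β ℂ) (k : ℕ)
    (M : Matrix (α × Fin k) (α × Fin k) ℂ) : Matrix (β × Fin k) (β × Fin k) ℂ :=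
  Matrix.of fun im jn => Γ (Matrix.of fun p q => M (p, im.2) (q, jn.2)) im.1 jn.1

/-- Completely positive trace-preserving linear map. -/
def IsCPTP (Γ : Matrix α α ℂ →ₗ[ℂ] Matrix β β ℂ) : Prop :=
  (∀ (k : ℕ) (M : Matrix (α × Fin k) (α × Fin k) ℂ), M.PosSemidef →
    (lmapExt Γ k M).PosSemidef) ∧ (∀ M, (Γ M).trace = M.trace)

/-- Partial trace over the second tensor factor. -/
def ptrB (M : Matrix (α × β) (α × β) ℂ) : Matrix α α ℂ :=
  Matrix.of fun i j => ∑ m, M (i, m) (j, m)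

/-- Partial trace over the first tensor factor. -/
def ptrA (M : Matrix (α × β) (α × β) ℂ) : Matrix β β ℂ :=
  Matrix.of fun i j => ∑ m, M (m, i) (m, j)

/-- Choi operator J(Λ) = Σ_{i,j} |i⟩⟨j| ⊗ Λ(|i⟩⟨j|). -/
def choi (Λ : Matrix α α ℂ →ₗ[ℂ] Matrix β β ℂ) : Matrix (α × β) (α × β) ℂ :=
  Matrix.of fun p q => Λ (Matrix.single p.1 q.1 1) p.2 q.2

/-- Entanglement-breaking channel: all extended outputs are separable. -/
def IsEB (Λ : Matrix α α ℂ →ₗ[ℂ] Matrix β β ℂ) : Prop :=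
  IsCPTP Λ ∧ ∀ (k : ℕ) (ρ : Matrix (α × Fin k) (α × Fin k) ℂ), IsDensity ρ →
    lmapExt Λ k ρ ∈ SepSet β (Fin k)

end

/-! Let `φ = |v⟩⟨v|` and let `σ = ∑ q x • x` be a mixture of `E` within `Δ` of `φ`. For a traceless
Hermitian `A`, `⟨v, A v⟩` is a convex combination of the eigenvalues of `A`, hence at most the sum
of their positive parts, which is `‖A‖₁ / 2`. With `A = φ - σ` this gives
`∑ q x * |⟨u_x, v⟩|² ≥ 1 - Δ`, so some `x = |u_x⟩⟨u_x| ∈ E` has `|⟨u_x, v⟩|² ≥ 1 - Δ`. Two pure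
states `P`, `Q` are at trace distance `√(1 - |⟨u, v⟩|²)`, because
`(P - Q)³ = (1 - |⟨u, v⟩|²) (P - Q)` identifies `|P - Q|` as a multiple of `(P - Q)²`. -/

open scoped MatrixOrder

theorem IsIdempotentElem.sub_pow_three {R A : Type*} [CommRing R] [Ring A] [Algebra R A]
    {P Q : A} {s : R} (hP : IsIdempotentElem P) (hQ : IsIdempotentElem Q)
    (hPQP : P * Q * P = s • P) (hQPQ : Q * P * Q = s • Q) :
    (P - Q) ^ 3 = (1 - s) • (P - Q) := by
  have hsq : (P - Q) ^ 2 = P + Q - P * Q - Q * P := by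
    rw [sq, sub_mul, mul_sub, mul_sub, hP.eq, hQ.eq]; abel
  have hsqP : (P - Q) ^ 2 * P = (1 - s) • P := by
    rw [hsq, sub_mul, sub_mul, add_mul, hP.eq, hPQP, mul_assoc Q P P, hP.eq, sub_smul, one_smul]
    abel
  have hsqQ : (P - Q) ^ 2 * Q = (1 - s) • Q := by
    rw [hsq, sub_mul, sub_mul, add_mul, hQ.eq, hQPQ, mul_assoc P Q Q, hQ.eq, sub_smul, one_smul]
    abel
  rw [pow_succ, mul_sub, hsqP, hsqQ, smul_sub]

namespace CFC

variable {A : Type*} [PartialOrder A] [NonUnitalRing A] [TopologicalSpace A] [StarRing A]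
  [Module ℝ A] [SMulCommClass ℝ A A] [IsScalarTower ℝ A A] [StarOrderedRing A]
  [NonUnitalContinuousFunctionalCalculus ℝ A IsSelfAdjoint] [NonnegSpectrumClass ℝ A]
  [IsSemitopologicalRing A] [T2Space A] [PosSMulMono ℝ A]

theorem sqrt_eq_inv_sqrt_smul_of_mul_self_eq_smul {a : A} (ha : 0 ≤ a) {r : ℝ} (hr : 0 ≤ r)
    (h : a * a = r • a) : sqrt a = (√r)⁻¹ • a := by
  -- at `r = 0` the junk value `(√0)⁻¹ = 0` is harmless, since then `a = 0`
  rcases hr.eq_or_lt with rfl | hr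
  · rw [zero_smul] at h
    obtain rfl : a = 0 := by rw [← sqrt_mul_self a ha, h, sqrt_zero]
    rw [sqrt_zero, smul_zero]
  refine sqrt_unique ?_ (smul_nonneg (by positivity) ha)
  rw [smul_mul_smul_comm, h, smul_smul, ← sq, inv_pow, Real.sq_sqrt hr.le, inv_mul_cancel₀ hr.ne',
    one_smul]

end CFC

section TraceNorm

variable {n : Type*} [Fintype n] [DecidableEq n]

theorem msqrt_eq_sqrt {M : Matrix n n ℂ} (hM : M.PosSemidef) : msqrt M = CFC.sqrt M := by
  have e : msqrt M = (hM.1.eigenvectorUnitary : Matrix n n ℂ) *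
      diagonal ((↑) ∘ (fun x : ℝ => Real.sqrt x) ∘ hM.1.eigenvalues) *
      (star hM.1.eigenvectorUnitary : Matrix n n ℂ) := dif_pos hM
  rw [e, CFC.sqrt_eq_cfc, cfc_nnreal_eq_real _ M hM.nonneg, hM.1.cfc_eq, IsHermitian.cfc,
    Unitary.conjStarAlgAut_apply]
  congr 3
  funext i
  simp [hM.eigenvalues_nonneg i]

theorem Matrix.IsHermitian.traceNorm_eq {A : Matrix n n ℂ} (hA : A.IsHermitian) :
    traceNorm A = (CFC.sqrt (A * A)).trace.re := by
  conv_lhs => rw [traceNorm, hA.eq]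
  rw [msqrt_eq_sqrt (by simpa [hA.eq] using posSemidef_self_mul_conjTranspose A)]

theorem Matrix.IsHermitian.trace_cfc {A : Matrix n n ℂ} (hA : A.IsHermitian) (f : ℝ → ℝ) :
    (cfc f A).trace = ∑ i, (f (hA.eigenvalues i) : ℂ) := by
  rw [hA.cfc_eq, IsHermitian.cfc, Unitary.conjStarAlgAut_apply, trace_mul_cycle,
    Unitary.star_mul_self_of_mem hA.eigenvectorUnitary.2, one_mul, trace_diagonal]
  rfl

theorem Matrix.IsHermitian.traceNorm_eq_sum_abs_eigenvalues {A : Matrix n n ℂ}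
    (hA : A.IsHermitian) : traceNorm A = ∑ i, |hA.eigenvalues i| := by
  have habs : CFC.sqrt (A * A) = cfc (‖·‖) A := by
    rw [← CFC.abs_eq_cfc_norm A hA.isSelfAdjoint, CFC.abs, star_eq_conjTranspose, hA.eq]
  rw [hA.traceNorm_eq, habs, hA.trace_cfc, ← Complex.ofReal_sum, Complex.ofReal_re]
  rfl

theorem traceNorm_neg (M : Matrix n n ℂ) : traceNorm (-M) = traceNorm M := by
  simp [traceNorm]

theorem traceDist_comm (ρ σ : Matrix n n ℂ) : traceDist ρ σ = traceDist σ ρ := by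
  rw [traceDist, traceDist, ← traceNorm_neg, neg_sub]

end TraceNorm

theorem Finset.sum_mul_le_half_sum_abs {ι : Type*} (s : Finset ι) {l p : ι → ℝ}
    (hl : ∑ i ∈ s, l i = 0) (hp0 : ∀ i ∈ s, 0 ≤ p i) (hp1 : ∀ i ∈ s, p i ≤ 1) :
    ∑ i ∈ s, l i * p i ≤ (∑ i ∈ s, |l i|) / 2 := by
  have hpos : ∀ i ∈ s, l i * p i ≤ (l i + |l i|) / 2 := fun i hi => by
    rcases le_total (l i) 0 with h | h
    · rw [abs_of_nonpos h]; nlinarith [hp0 i hi]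
    · rw [abs_of_nonneg h]; nlinarith [hp1 i hi]
  calc ∑ i ∈ s, l i * p i ≤ ∑ i ∈ s, (l i + |l i|) / 2 := Finset.sum_le_sum hpos
    _ = (∑ i ∈ s, |l i|) / 2 := by rw [← Finset.sum_div, Finset.sum_add_distrib, hl, zero_add]

section Expectation

variable {n : Type*} [Fintype n]

theorem star_dotProduct_self_eq_sum_normSq (v : n → ℂ) :
    star v ⬝ᵥ v = ((∑ i, Complex.normSq (v i) : ℝ) : ℂ) := by
  simp [dotProduct, Complex.normSq_eq_conj_mul_self]

theorem star_dotProduct_conj_mulVec (U M : Matrix n n ℂ) (v : n → ℂ) :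
    star (star U *ᵥ v) ⬝ᵥ M *ᵥ (star U *ᵥ v) = star v ⬝ᵥ (U * M * star U) *ᵥ v := by
  rw [star_mulVec, star_eq_conjTranspose, conjTranspose_conjTranspose, ← dotProduct_mulVec,
    mulVec_mulVec, mulVec_mulVec, mul_assoc]

variable [DecidableEq n]

theorem star_dotProduct_diagonal_mulVec (d : n → ℝ) (w : n → ℂ) :
    (star w ⬝ᵥ diagonal (fun i => (d i : ℂ)) *ᵥ w).re = ∑ i, d i * Complex.normSq (w i) := by
  simp only [dotProduct, mulVec_diagonal, Complex.re_sum]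
  refine Finset.sum_congr rfl fun i _ => ?_
  simp [Complex.normSq_apply, Complex.mul_re, Complex.mul_im]
  ring

theorem Matrix.IsHermitian.exists_re_dotProduct_mulVec_eq_sum {A : Matrix n n ℂ}
    (hA : A.IsHermitian) (v : n → ℂ) :
    ∃ p : n → ℝ, (∀ i, 0 ≤ p i) ∧ ((∑ i, p i : ℝ) : ℂ) = star v ⬝ᵥ v ∧
      (star v ⬝ᵥ A *ᵥ v).re = ∑ i, hA.eigenvalues i * p i := by
  set U : Matrix n n ℂ := (hA.eigenvectorUnitary : Matrix n n ℂ)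
  refine ⟨fun i => Complex.normSq ((star U *ᵥ v) i), fun i => Complex.normSq_nonneg _, ?_, ?_⟩
  · rw [← star_dotProduct_self_eq_sum_normSq]
    nth_rw 2 [← one_mulVec (star U *ᵥ v)]
    rw [star_dotProduct_conj_mulVec, mul_one, Unitary.mul_star_self_of_mem hA.eigenvectorUnitary.2,
      one_mulVec]
  · rw [← star_dotProduct_diagonal_mulVec, star_dotProduct_conj_mulVec]
    conv_lhs => rw [hA.spectral_theorem, Unitary.conjStarAlgAut_apply]
    rfl

theorem Matrix.IsHermitian.re_dotProduct_mulVec_le_traceNorm_half {A : Matrix n n ℂ}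
    (hA : A.IsHermitian) (htr : A.trace = 0) {v : n → ℂ} (hv : star v ⬝ᵥ v = 1) :
    (star v ⬝ᵥ A *ᵥ v).re ≤ traceNorm A / 2 := by
  obtain ⟨p, hp0, hp1, hAv⟩ := hA.exists_re_dotProduct_mulVec_eq_sum v
  rw [hv] at hp1
  have hsum : ∑ i, p i = 1 := by exact_mod_cast hp1
  have hl : ∑ i, hA.eigenvalues i = 0 := by
    simpa using congrArg Complex.re (hA.trace_eq_sum_eigenvalues.symm.trans htr)
  rw [hAv, hA.traceNorm_eq_sum_abs_eigenvalues]
  exact Finset.univ.sum_mul_le_half_sum_abs hl (fun i _ => hp0 i)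
    fun i _ => hsum ▸ Finset.single_le_sum (fun j _ => hp0 j) (Finset.mem_univ i)

end Expectation

theorem vecState_eq_vecMulVec {n : Type*} (u : n → ℂ) : vecState u = vecMulVec u (star u) := rfl

section PureStates

variable {n : Type*}

theorem vecState_isHermitian (u : n → ℂ) : (vecState u).IsHermitian := by
  rw [vecState_eq_vecMulVec, IsHermitian, conjTranspose_vecMulVec, star_star]

variable [Fintype n]

theorem isPure_iff {φ : Matrix n n ℂ} : IsPure φ ↔ ∃ v, star v ⬝ᵥ v = 1 ∧ φ = vecState v := by
  simp only [IsPure, star_dotProduct_self_eq_sum_normSq, Complex.ofReal_eq_one]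

theorem trace_vecState (u : n → ℂ) : (vecState u).trace = star u ⬝ᵥ u := by
  rw [vecState_eq_vecMulVec, trace_vecMulVec, dotProduct_comm]

theorem vecState_mul_vecState (u v : n → ℂ) :
    vecState u * vecState v = (star u ⬝ᵥ v) • vecMulVec u (star v) := by
  rw [vecState_eq_vecMulVec, vecState_eq_vecMulVec, vecMulVec_mul_vecMulVec, vecMulVec_smul]

theorem isIdempotentElem_vecState {u : n → ℂ} (hu : star u ⬝ᵥ u = 1) :
    IsIdempotentElem (vecState u) := by
  rw [IsIdempotentElem, vecState_mul_vecState, hu, one_smul, vecState_eq_vecMulVec]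

theorem vecState_mul_vecState_mul_vecState (u v : n → ℂ) :
    vecState u * vecState v * vecState u = Complex.normSq (star u ⬝ᵥ v) • vecState u := by
  rw [vecState_mul_vecState, smul_mul_assoc, vecState_eq_vecMulVec, vecMulVec_mul_vecMulVec,
    vecMulVec_smul, smul_smul, star_dotProduct v, Complex.star_def, Complex.mul_conj,
    Complex.coe_smul]

theorem re_star_dotProduct_vecState_mulVec (u v : n → ℂ) :
    (star v ⬝ᵥ vecState u *ᵥ v).re = Complex.normSq (star u ⬝ᵥ v) := by
  rw [vecState_eq_vecMulVec, vecMulVec_mulVec, op_smul_eq_smul, dotProduct_smul, smul_eq_mul,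
    star_dotProduct v, Complex.star_def, Complex.mul_conj, Complex.ofReal_re]

theorem IsPure.isHermitian {φ : Matrix n n ℂ} (hφ : IsPure φ) : φ.IsHermitian := by
  obtain ⟨v, -, rfl⟩ := hφ
  exact vecState_isHermitian v

theorem IsPure.trace_eq_one {φ : Matrix n n ℂ} (hφ : IsPure φ) : φ.trace = 1 := by
  obtain ⟨v, hv, rfl⟩ := isPure_iff.mp hφ
  rw [trace_vecState, hv]

end PureStates

section Distance

variable {n : Type*} [Fintype n] [DecidableEq n]

theorem traceNorm_sub_eq_two_mul_sqrt {P Q : Matrix n n ℂ} (hPh : P.IsHermitian)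
    (hQh : Q.IsHermitian) (hP : IsIdempotentElem P) (hQ : IsIdempotentElem Q)
    (htrP : P.trace = 1) (htrQ : Q.trace = 1) {s : ℝ} (hPQP : P * Q * P = s • P)
    (hQPQ : Q * P * Q = s • Q) : traceNorm (P - Q) = 2 * √(1 - s) := by
  set D := P - Q
  have hD : D.IsHermitian := hPh.sub hQh
  have htrPQ : (P * Q).trace = s := by
    rw [← hP.eq, mul_assoc, trace_mul_comm, hPQP, trace_smul, htrP, Complex.real_smul, mul_one]
  have htrD : (D * D).trace = ((2 * (1 - s) : ℝ) : ℂ) := by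
    rw [sub_mul, mul_sub, mul_sub, hP.eq, hQ.eq, trace_sub, trace_sub, trace_sub, trace_mul_comm Q,
      htrPQ, htrP, htrQ]
    push_cast; ring
  have hDD : (0 : Matrix n n ℂ) ≤ D * D := by
    simpa [hD.eq] using (posSemidef_conjTranspose_mul_self D).nonneg
  have hr : 0 ≤ 1 - s := by
    have := (Matrix.nonneg_iff_posSemidef.mp hDD).trace_nonneg
    rw [htrD] at this
    have := Complex.zero_le_real.mp this
    linarith
  have hsq : D * D * (D * D) = (1 - s) • (D * D) := by
    rw [← mul_assoc, ← pow_three', hP.sub_pow_three hQ hPQP hQPQ, smul_mul_assoc]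
  rw [hD.traceNorm_eq, CFC.sqrt_eq_inv_sqrt_smul_of_mul_self_eq_smul hDD hr hsq, trace_smul, htrD,
    Complex.real_smul, ← Complex.ofReal_mul, Complex.ofReal_re, mul_left_comm, ← div_eq_inv_mul,
    Real.div_sqrt]

theorem traceDist_vecState_vecState {u v : n → ℂ} (hu : star u ⬝ᵥ u = 1)
    (hv : star v ⬝ᵥ v = 1) :
    traceDist (vecState u) (vecState v) = √(1 - Complex.normSq (star u ⬝ᵥ v)) := by
  have hvu : Complex.normSq (star v ⬝ᵥ u) = Complex.normSq (star u ⬝ᵥ v) := by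
    rw [star_dotProduct, Complex.star_def, Complex.normSq_conj]
  rw [traceDist, traceNorm_sub_eq_two_mul_sqrt (vecState_isHermitian u) (vecState_isHermitian v)
    (isIdempotentElem_vecState hu) (isIdempotentElem_vecState hv) (by rw [trace_vecState, hu])
    (by rw [trace_vecState, hv]) (vecState_mul_vecState_mul_vecState u v)
    (hvu ▸ vecState_mul_vecState_mul_vecState v u)]
  ring

theorem one_sub_re_dotProduct_mulVec_le_traceDist {σ : Matrix n n ℂ} (hσ : σ.IsHermitian)
    (htr : σ.trace = 1) {v : n → ℂ} (hv : star v ⬝ᵥ v = 1) :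
    1 - (star v ⬝ᵥ σ *ᵥ v).re ≤ traceDist σ (vecState v) := by
  have hA : (vecState v - σ).IsHermitian := (vecState_isHermitian v).sub hσ
  have hAtr : (vecState v - σ).trace = 0 := by rw [trace_sub, trace_vecState, hv, htr, sub_self]
  have hAv : (star v ⬝ᵥ (vecState v - σ) *ᵥ v).re = 1 - (star v ⬝ᵥ σ *ᵥ v).re := by
    rw [sub_mulVec, dotProduct_sub, Complex.sub_re, re_star_dotProduct_vecState_mulVec, hv,
      Complex.normSq_one]
  rw [traceDist_comm, traceDist, ← hAv]
  exact hA.re_dotProduct_mulVec_le_traceNorm_half hAtr hv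

theorem one_sub_sum_mul_re_le_traceDist_sum_smul {E : Finset (Matrix n n ℂ)}
    (hE : ∀ x ∈ E, IsPure x) {q : Matrix n n ℂ → ℝ} (hq : ∑ x ∈ E, q x = 1) {v : n → ℂ}
    (hv : star v ⬝ᵥ v = 1) :
    1 - ∑ x ∈ E, q x * (star v ⬝ᵥ x *ᵥ v).re ≤ traceDist (∑ x ∈ E, q x • x) (vecState v) := by
  have hσH : (∑ x ∈ E, q x • x).IsHermitian :=
    isSelfAdjoint_sum E fun x hx => .smul (.all _) (hE x hx).isHermitian
  have hσtr : (∑ x ∈ E, q x • x).trace = 1 := by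
    rw [trace_sum, Finset.sum_congr rfl fun x hx => by rw [trace_smul, (hE x hx).trace_eq_one],
      ← Finset.sum_smul, hq, one_smul]
  convert one_sub_re_dotProduct_mulVec_le_traceDist hσH hσtr hv using 2
  simp [sum_mulVec, dotProduct_sum, Complex.re_sum, smul_mulVec]

end Distance

theorem net_of_convexHull_net {d : ℕ} {Δ : ℝ}
    (E : Finset (Matrix (Fin d) (Fin d) ℂ)) (hE : ∀ x ∈ E, IsPure x)
    (h : ∀ φ : Matrix (Fin d) (Fin d) ℂ, IsPure φ →
      ∃ q : Matrix (Fin d) (Fin d) ℂ → ℝ, (∀ x, 0 ≤ q x) ∧ (∑ x ∈ E, q x = 1) ∧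
        traceDist (∑ x ∈ E, q x • x) φ ≤ Δ) :
    ∀ φ : Matrix (Fin d) (Fin d) ℂ, IsPure φ →
      ∃ x ∈ E, traceDist x φ ≤ Real.sqrt Δ := by
  intro φ hφ
  obtain ⟨q, hq0, hq1, hqΔ⟩ := h φ hφ
  obtain ⟨v, hv, rfl⟩ := isPure_iff.mp hφ
  set f : Matrix (Fin d) (Fin d) ℂ → ℝ := fun x => (star v ⬝ᵥ x *ᵥ v).re
  obtain ⟨x, hxE, hxmax⟩ :=
    E.exists_max_image f (Finset.nonempty_of_sum_ne_zero (hq1 ▸ one_ne_zero))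
  have hmix : 1 - ∑ y ∈ E, q y * f y ≤ Δ :=
    (one_sub_sum_mul_re_le_traceDist_sum_smul hE hq1 hv).trans hqΔ
  have hmax : ∑ y ∈ E, q y * f y ≤ f x := calc
    ∑ y ∈ E, q y * f y ≤ ∑ y ∈ E, q y * f x :=
        Finset.sum_le_sum fun y hy => mul_le_mul_of_nonneg_left (hxmax y hy) (hq0 y)
    _ = f x := by rw [← Finset.sum_mul, hq1, one_mul]
  obtain ⟨u, hu, rfl⟩ := isPure_iff.mp (hE x hxE)
  refine ⟨_, hxE, ?_⟩
  rw [traceDist_vecState_vecState hu hv, ← re_star_dotProduct_vecState_mulVec]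
  exact Real.sqrt_le_sqrt (by linarith)
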